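/- A matrix A ∈ s(3) is indivisible if and only if there exist permutation matrices P, Q such that sgn(P·A·Q) equals the matrix [[0,1,1],[1,0,1],[1,1,0]]. -/

import Mathlib

/-!
Write `posSupport M` for the pattern `0 < M i j`. For nonnegative matrices the pattern of `B * C` is
the relational composite of the patterns of `B` and `C`, and a stochastic matrix is a permutation
matrix exactly when its pattern is the graph of a permutation.

A permutation matrix is divisible as `A * 1`. If the support of column `k` of `A` lies in that of
column `j ≠ k`, then `A = B * C` with `C` the identity except for column `j`, which is
`(1 - t) e_j + t e_k`, and `B` equal to `A` except for column `j`, which is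
`(A_j - t A_k) / (1 - t)`; for small `t > 0` both are stochastic and neither is a permutation
matrix. A 3 × 3 pattern without zero columns and without such inclusions is a permutation or the
complement of one.

Conversely, once the pattern of `A` is the off-diagonal one, a factorisation `A = B * C` covers the
six off-diagonal cells by the three rectangles `{i | 0 < B i k} × {j | 0 < C k j}`, none of which
meets the diagonal. A short case analysis shows that either every column of `C` or every row of `B`
has a single positive entry, so `C` or `B` is a permutation matrix; not both, as `A` is not one.
-/

open Matrix

def IsStochastic {n : ℕ} (A : Matrix (Fin n) (Fin n) ℝ) : Prop :=
  (∀ i j, 0 ≤ A i j) ∧ ∀ j, ∑ i, A i j = 1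

def IsPermMatrix {n : ℕ} (A : Matrix (Fin n) (Fin n) ℝ) : Prop :=
  ∃ σ : Equiv.Perm (Fin n), ∀ i j, A i j = if σ j = i then 1 else 0

open Filter Topology

def IsPermPattern {α : Type*} (r : α → α → Prop) : Prop :=
  ∃ σ : Equiv.Perm α, ∀ i k, r i k ↔ i = σ k

namespace IsPermPattern

variable {α : Type*} {r : α → α → Prop}

lemma of_injective [Finite α] {g : α → α} (hg : g.Injective) (h : ∀ i k, r i k ↔ i = g k) :
    IsPermPattern r :=
  ⟨Equiv.ofBijective g (Finite.injective_iff_bijective.1 hg), h⟩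

lemma of_flip (h : IsPermPattern (flip r)) : IsPermPattern r := by
  obtain ⟨σ, hσ⟩ := h
  exact ⟨σ⁻¹, fun i k => by rw [Equiv.Perm.eq_inv_iff_eq, eq_comm]; exact hσ k i⟩

lemma leftUnique (h : IsPermPattern r) : Relator.LeftUnique r := by
  obtain ⟨σ, hσ⟩ := h
  intro i i' k hi hi'
  rw [(hσ i k).1 hi, (hσ i' k).1 hi']

lemma rightUnique (h : IsPermPattern r) : Relator.RightUnique r := by
  obtain ⟨σ, hσ⟩ := h
  intro i k k' hk hk'
  exact σ.injective (((hσ i k).1 hk).symm.trans ((hσ i k').1 hk'))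

end IsPermPattern

lemma fin_three_eq_of_ne_of_ne :
    ∀ {a b x y : Fin 3}, a ≠ b → x ≠ a → x ≠ b → y ≠ a → y ≠ b → x = y := by
  decide

lemma fin_three_exists_ne_ne : ∀ a b : Fin 3, ∃ x, x ≠ a ∧ x ≠ b := by
  decide

section OffDiagonalCover

variable {α : Type*} {b c : α → α → Prop}

lemma Relation.exists_of_comp_eq_ne (h : Relation.Comp b c = (· ≠ ·)) {i j : α} (hij : i ≠ j) :
    ∃ k, b i k ∧ c k j := by
  rwa [← Relation.Comp, h]

lemma Relation.not_and_of_comp_eq_ne (h : Relation.Comp b c = (· ≠ ·)) (i k : α) :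
    ¬(b i k ∧ c k i) :=
  fun hbc => (congrFun₂ h i i ▸ ⟨k, hbc⟩ : i ≠ i) rfl

lemma Relation.flip_comp_flip_eq_ne (h : Relation.Comp b c = (· ≠ ·)) :
    Relation.Comp (flip c) (flip b) = (· ≠ ·) := by
  rw [← Relation.flip_comp, h]
  funext i j
  exact propext ne_comm

lemma isPermPattern_of_comp_eq_ne [Finite α] [Nontrivial α] (h : Relation.Comp b c = (· ≠ ·))
    (hc : Relator.LeftUnique c) : IsPermPattern c := by
  have hcol : ∀ j, ∃ k, c k j := fun j =>
    let ⟨_, hij⟩ := exists_ne j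
    let ⟨k, _, hkj⟩ := Relation.exists_of_comp_eq_ne h hij
    ⟨k, hkj⟩
  choose g hg using hcol
  refine .of_injective (g := g) (fun j j' hjj' => ?_) fun k j => ⟨fun hkj => hc hkj (hg j), ?_⟩
  · by_contra hne
    obtain ⟨k, hbk, hkj⟩ := Relation.exists_of_comp_eq_ne h (Ne.symm hne)
    exact Relation.not_and_of_comp_eq_ne h j' k ⟨hbk, hc hkj (hg j) ▸ hjj' ▸ hg j'⟩
  · rintro rfl
    exact hg j

variable {b c : Fin 3 → Fin 3 → Prop}

lemma exists_row_of_not_leftUnique (h : Relation.Comp b c = (· ≠ ·))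
    (hc : ¬Relator.LeftUnique c) : ∃ k j, (∀ i, b i k ↔ i = j) ∧ ∀ l, c k l ↔ l ≠ j := by
  simp only [Relator.LeftUnique, not_forall] at hc
  obtain ⟨k₁, k₂, j, h₁, h₂, hk⟩ := hc
  have avoid : ∀ {k}, b j k → k ≠ k₁ ∧ k ≠ k₂ := fun hbk =>
    ⟨by rintro rfl; exact Relation.not_and_of_comp_eq_ne h j _ ⟨hbk, h₁⟩,
     by rintro rfl; exact Relation.not_and_of_comp_eq_ne h j _ ⟨hbk, h₂⟩⟩
  -- row `j` of the cover avoids the rectangles `k₁` and `k₂`, so the third one contains all of it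
  obtain ⟨l, hl⟩ := exists_ne j
  obtain ⟨k, hbk, -⟩ := Relation.exists_of_comp_eq_ne h hl.symm
  have hck : ∀ l, c k l ↔ l ≠ j := by
    refine fun l => ⟨fun hcl hlj => Relation.not_and_of_comp_eq_ne h j k ⟨hbk, hlj ▸ hcl⟩,
      fun hlj => ?_⟩
    obtain ⟨k', hbk', hck'⟩ := Relation.exists_of_comp_eq_ne h (Ne.symm hlj)
    obtain ⟨hk'₁, hk'₂⟩ := avoid hbk'
    obtain ⟨hk₁, hk₂⟩ := avoid hbk
    rwa [fin_three_eq_of_ne_of_ne hk hk'₁ hk'₂ hk₁ hk₂] at hck'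
  refine ⟨k, j, fun i => ⟨fun hbi => ?_, fun hij => hij ▸ hbk⟩, hck⟩
  by_contra hij
  exact Relation.not_and_of_comp_eq_ne h i k ⟨hbi, (hck i).2 hij⟩

lemma false_of_row_of_col (h : Relation.Comp b c = (· ≠ ·)) {k k' i j : Fin 3}
    (hbk : ∀ x, b x k ↔ x = j) (hck : ∀ y, c k y ↔ y ≠ j)
    (hbk' : ∀ x, b x k' ↔ x ≠ i) (hck' : ∀ y, c k' y ↔ y = i) : False := by
  obtain ⟨x, hxi, hxj⟩ := fin_three_exists_ne_ne i j
  have hkk' : k ≠ k' := by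
    rintro rfl
    exact hxi ((hck' x).1 ((hck x).2 hxj))
  obtain ⟨y, hyx, hyi⟩ := fin_three_exists_ne_ne x i
  obtain ⟨z, hzx, hzj⟩ := fin_three_exists_ne_ne x j
  -- the cells `(x, y)` and `(z, x)` lie in neither rectangle `k` nor `k'`, hence in a common third
  -- one, which then contains the diagonal cell `(x, x)`
  obtain ⟨m, hbm, hcm⟩ := Relation.exists_of_comp_eq_ne h hyx.symm
  obtain ⟨m', hbm', hcm'⟩ := Relation.exists_of_comp_eq_ne h hzx
  have hmm' : m = m' := fin_three_eq_of_ne_of_ne hkk'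
    (by rintro rfl; exact hxj ((hbk x).1 hbm)) (by rintro rfl; exact hyi ((hck' y).1 hcm))
    (by rintro rfl; exact hzj ((hbk z).1 hbm')) (by rintro rfl; exact hxi ((hck' x).1 hcm'))
  exact Relation.not_and_of_comp_eq_ne h x m ⟨hbm, hmm' ▸ hcm'⟩

theorem xor_isPermPattern_of_comp_eq_ne (h : Relation.Comp b c = (· ≠ ·)) :
    Xor (IsPermPattern b) (IsPermPattern c) := by
  rw [xor_iff_or_and_not_and]
  constructor
  · by_contra! hnone
    obtain ⟨hb, hc⟩ := hnone
    have hb' : ¬Relator.LeftUnique (flip b) := fun hb' =>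
      hb (isPermPattern_of_comp_eq_ne (Relation.flip_comp_flip_eq_ne h) hb').of_flip
    have hc' : ¬Relator.LeftUnique c := fun hc' => hc (isPermPattern_of_comp_eq_ne h hc')
    obtain ⟨k, j, hbk, hck⟩ := exists_row_of_not_leftUnique h hc'
    obtain ⟨k', i, hck', hbk'⟩ :=
      exists_row_of_not_leftUnique (Relation.flip_comp_flip_eq_ne h) hb'
    exact false_of_row_of_col h hbk hck hbk' hck'
  · rintro ⟨hb, hc⟩
    obtain ⟨k₁, hb₁, hc₁⟩ := Relation.exists_of_comp_eq_ne h (show (1 : Fin 3) ≠ 0 by decide)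
    obtain ⟨k₂, hb₂, hc₂⟩ := Relation.exists_of_comp_eq_ne h (show (2 : Fin 3) ≠ 0 by decide)
    obtain rfl := hc.leftUnique hc₁ hc₂
    exact absurd (hb.leftUnique hb₁ hb₂) (by decide)

end OffDiagonalCover

set_option maxRecDepth 10000 in
lemma col_subset_or_isPermPattern_or_isPermPattern_not (r : Fin 3 → Fin 3 → Prop)
    (hr : ∀ j, ∃ i, r i j) :
    (∃ j k, j ≠ k ∧ ∀ i, r i k → r i j) ∨ IsPermPattern r ∨ IsPermPattern fun i j => ¬r i j := by
  classical
  have key : ∀ p : Fin 3 → Fin 3 → Bool, (∀ j, ∃ i, p i j) →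
      (∃ j k, j ≠ k ∧ ∀ i, p i k → p i j) ∨ IsPermPattern (fun i j => p i j) ∨
        IsPermPattern (fun i j => ¬p i j) := by
    unfold IsPermPattern
    decide
  simpa using key (fun i j => decide (r i j)) (by simpa using hr)

def posSupport {ι : Type*} (M : Matrix ι ι ℝ) (i j : ι) : Prop := 0 < M i j

def IsIndivisible {n : ℕ} (A : Matrix (Fin n) (Fin n) ℝ) : Prop :=
  ∀ B C : Matrix (Fin n) (Fin n) ℝ, IsStochastic B → IsStochastic C → A = B * C →
    Xor (IsPermMatrix B) (IsPermMatrix C)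

section Stochastic

variable {n : ℕ} {A B C P Q : Matrix (Fin n) (Fin n) ℝ}

lemma isStochastic_iff_mem_colStochastic : IsStochastic A ↔ A ∈ colStochastic ℝ (Fin n) :=
  mem_colStochastic_iff_sum.symm

lemma IsStochastic.mul (hA : IsStochastic A) (hB : IsStochastic B) : IsStochastic (A * B) := by
  rw [isStochastic_iff_mem_colStochastic] at *
  exact Submonoid.mul_mem _ hA hB

lemma IsStochastic.exists_pos (hA : IsStochastic A) (j : Fin n) : ∃ i, 0 < A i j := by
  obtain ⟨i, -, hi⟩ := Finset.exists_ne_zero_of_sum_ne_zero (hA.2 j ▸ one_ne_zero)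
  exact ⟨i, (hA.1 i j).lt_of_ne' hi⟩

lemma IsStochastic.updateCol (hA : IsStochastic A) (j : Fin n) {v : Fin n → ℝ}
    (hv : ∀ i, 0 ≤ v i) (hsum : ∑ i, v i = 1) : IsStochastic (A.updateCol j v) := by
  refine ⟨fun i l => ?_, fun l => ?_⟩ <;> rcases eq_or_ne l j with rfl | hl
  all_goals simp_all [hA.1, hA.2]

lemma isPermMatrix_iff_exists_eq_permMatrix :
    IsPermMatrix A ↔ ∃ σ : Equiv.Perm (Fin n), A = σ.permMatrix ℝ := by
  refine ⟨fun ⟨σ, hσ⟩ => ⟨σ⁻¹, ?_⟩, fun ⟨σ, hσ⟩ => ⟨σ⁻¹, ?_⟩⟩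
  · ext i j
    simp [hσ, Equiv.toPEquiv_apply, Equiv.Perm.inv_def, Equiv.symm_apply_eq, eq_comm (a := i)]
  · intro i j
    simp [hσ, Equiv.toPEquiv_apply, Equiv.Perm.inv_def, Equiv.symm_apply_eq, eq_comm (a := j)]

lemma isPermMatrix_permMatrix (σ : Equiv.Perm (Fin n)) : IsPermMatrix (σ.permMatrix ℝ) :=
  isPermMatrix_iff_exists_eq_permMatrix.2 ⟨σ, rfl⟩

lemma isPermMatrix_one : IsPermMatrix (1 : Matrix (Fin n) (Fin n) ℝ) := by
  simpa using isPermMatrix_permMatrix (1 : Equiv.Perm (Fin n))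

lemma IsPermMatrix.isStochastic (hA : IsPermMatrix A) : IsStochastic A := by
  obtain ⟨σ, rfl⟩ := isPermMatrix_iff_exists_eq_permMatrix.1 hA
  exact isStochastic_iff_mem_colStochastic.2 permMatrix_mem_colStochastic

lemma IsPermMatrix.mul (hA : IsPermMatrix A) (hB : IsPermMatrix B) : IsPermMatrix (A * B) := by
  obtain ⟨σ, rfl⟩ := isPermMatrix_iff_exists_eq_permMatrix.1 hA
  obtain ⟨τ, rfl⟩ := isPermMatrix_iff_exists_eq_permMatrix.1 hB
  rw [← permMatrix_mul]
  exact isPermMatrix_permMatrix _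

lemma IsPermMatrix.exists_inv (hP : IsPermMatrix P) :
    ∃ P', IsPermMatrix P' ∧ P' * P = 1 ∧ P * P' = 1 := by
  obtain ⟨σ, rfl⟩ := isPermMatrix_iff_exists_eq_permMatrix.1 hP
  exact ⟨_, isPermMatrix_permMatrix σ⁻¹, by simp [← permMatrix_mul], by simp [← permMatrix_mul]⟩

lemma IsPermMatrix.mul_left_iff (hP : IsPermMatrix P) :
    IsPermMatrix (P * B) ↔ IsPermMatrix B := by
  obtain ⟨P', hP', hP'P, -⟩ := hP.exists_inv
  exact ⟨fun h => by simpa [← mul_assoc, hP'P] using hP'.mul h, hP.mul⟩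

lemma IsPermMatrix.mul_right_iff (hQ : IsPermMatrix Q) :
    IsPermMatrix (B * Q) ↔ IsPermMatrix B := by
  obtain ⟨Q', hQ', -, hQQ'⟩ := hQ.exists_inv
  exact ⟨fun h => by simpa [mul_assoc, hQQ'] using h.mul hQ', (·.mul hQ)⟩

lemma posSupport_mul (hB : ∀ i j, 0 ≤ B i j) (hC : ∀ i j, 0 ≤ C i j) :
    posSupport (B * C) = Relation.Comp (posSupport B) (posSupport C) := by
  ext i j
  simp only [posSupport, mul_apply, Relation.Comp, Finset.mem_univ, true_and,
    Finset.sum_pos_iff_of_nonneg fun k _ => mul_nonneg (hB i k) (hC k j)]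
  exact exists_congr fun k => ⟨fun h => ⟨pos_of_mul_pos_left h (hC k j),
    pos_of_mul_pos_right h (hB i k)⟩, fun h => mul_pos h.1 h.2⟩

lemma isPermMatrix_iff_isPermPattern (hB : IsStochastic B) :
    IsPermMatrix B ↔ IsPermPattern (posSupport B) := by
  refine ⟨fun ⟨σ, hσ⟩ => ⟨σ, fun i k => ?_⟩, fun ⟨σ, hσ⟩ => ⟨σ, fun i k => ?_⟩⟩
  · by_cases h : σ k = i <;> simp [posSupport, hσ, h, @eq_comm _ i]
  · have hzero : ∀ i, i ≠ σ k → B i k = 0 := fun i hi =>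
      (((hB.1 i k).eq_or_lt).resolve_right fun hpos => hi ((hσ i k).1 hpos)).symm
    have hone : B (σ k) k = 1 := by
      rw [← hB.2 k, Finset.sum_eq_single (σ k) (fun i _ hi => hzero i hi) (by simp)]
    split_ifs with h
    · exact h ▸ hone
    · exact hzero i (Ne.symm h)

lemma IsIndivisible.of_mul_mul (h : IsIndivisible (P * A * Q)) (hP : IsPermMatrix P)
    (hQ : IsPermMatrix Q) : IsIndivisible A := by
  rintro B C hB hC rfl
  have := h (P * B) (C * Q) (hP.isStochastic.mul hB) (hC.mul hQ.isStochastic)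
    (by simp only [mul_assoc])
  rwa [hP.mul_left_iff, hQ.mul_right_iff] at this

lemma IsIndivisible.not_isPermMatrix (h : IsIndivisible A) : ¬IsPermMatrix A := fun hA => by
  simpa [hA, isPermMatrix_one] using
    h A 1 hA.isStochastic isPermMatrix_one.isStochastic (mul_one A).symm

lemma exists_mem_Ioo_mul_lt {ι : Type*} [Finite ι] {u v : ι → ℝ} (h : ∀ i, 0 < u i → 0 < v i) :
    ∃ t ∈ Set.Ioo (0 : ℝ) 1, ∀ i, 0 < u i → t * u i < v i := by
  have hsmall : ∀ᶠ t in 𝓝 (0 : ℝ), t < 1 ∧ ∀ i, 0 < u i → t * u i < v i := by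
    refine (eventually_lt_nhds one_pos).and (eventually_all.2 fun i => ?_)
    by_cases hi : 0 < u i
    · exact (((continuous_mul_const (u i)).tendsto' 0 0 (zero_mul _)).eventually_lt_const
        (h i hi)).mono fun t ht _ => ht
    · exact .of_forall fun t hi' => absurd hi' hi
  obtain ⟨t, ⟨ht1, ht⟩, ht0⟩ := ((hsmall.filter_mono nhdsWithin_le_nhds).and
    (eventually_mem_nhdsWithin (s := Set.Ioi 0))).exists
  exact ⟨t, ⟨ht0, ht1⟩, ht⟩

lemma not_isIndivisible_of_col_subset (hA : IsStochastic A) {j k : Fin n} (hjk : j ≠ k)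
    (hsub : ∀ i, 0 < A i k → 0 < A i j) : ¬IsIndivisible A := by
  obtain ⟨t, ⟨ht0, ht1⟩, ht⟩ := exists_mem_Ioo_mul_lt hsub
  have hle : ∀ i, t * A i k ≤ A i j := fun i =>
    ((hA.1 i k).eq_or_lt).elim (fun h => by simp [← h, hA.1 i j]) fun h => (ht i h).le
  set B := A.updateCol j fun i => (A i j - t * A i k) / (1 - t)
  set C := (1 : Matrix (Fin n) (Fin n) ℝ).updateCol j (Pi.single j (1 - t) + Pi.single k t)
  have hB : IsStochastic B := hA.updateCol j
    (fun i => div_nonneg (sub_nonneg.2 (hle i)) (sub_nonneg.2 ht1.le)) (by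
      rw [← Finset.sum_div, Finset.sum_sub_distrib, ← Finset.mul_sum, hA.2, hA.2, mul_one,
        div_self (sub_ne_zero.2 ht1.ne')])
  have hC : IsStochastic C := isPermMatrix_one.isStochastic.updateCol j
    (fun i => by simp only [Pi.add_apply, Pi.single_apply]; split_ifs <;> linarith)
    (by simp [Finset.sum_add_distrib])
  have hBC : A = B * C := by
    rw [mul_updateCol, mul_one]
    ext i l
    rcases eq_or_ne l j with rfl | hl
    · simp [B, mulVec_add, mulVec_single, hjk.symm]
      rw [div_mul_cancel₀ _ (sub_ne_zero.2 ht1.ne')]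
      ring
    · simp [B, hl]
  intro hind
  rcases hind B C hB hC hBC with ⟨hBp, -⟩ | ⟨hCp, -⟩
  · obtain ⟨i, hi⟩ := hA.exists_pos k
    refine hjk (((isPermMatrix_iff_isPermPattern hB).1 hBp).rightUnique (a := i) ?_ ?_)
    · simp [B, posSupport, ht i hi, ht1]
    · simp [B, posSupport, hjk.symm, hi]
  · refine hjk (((isPermMatrix_iff_isPermPattern hC).1 hCp).leftUnique (c := j) ?_ ?_)
    · simp [C, posSupport, hjk, ht1]
    · simp [C, posSupport, hjk.symm, ht0]

end Stochastic

lemma map_sign_eq_iff {M : Matrix (Fin 3) (Fin 3) ℝ} (hM : ∀ i j, 0 ≤ M i j) :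
    M.map Real.sign = !![0, 1, 1; 1, 0, 1; 1, 1, 0] ↔ posSupport M = (· ≠ ·) := by
  have hsign : ∀ i j, Real.sign (M i j) = if 0 < M i j then 1 else 0 := fun i j => by
    rcases (hM i j).eq_or_lt with h | h
    · simp [← h]
    · simp [h, Real.sign_of_pos h]
  simp only [← Matrix.ext_iff, funext_iff, eq_iff_iff, posSupport, map_apply, hsign]
  refine forall_congr' fun i => forall_congr' fun j => ?_
  fin_cases i <;> fin_cases j <;> simp

lemma map_sign_permMatrix_mul_eq {A : Matrix (Fin 3) (Fin 3) ℝ} (hA : IsStochastic A)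
    {σ : Equiv.Perm (Fin 3)} (hσ : ∀ i k, ¬posSupport A i k ↔ i = σ k) :
    (σ.permMatrix ℝ * A).map Real.sign = !![0, 1, 1; 1, 0, 1; 1, 1, 0] := by
  rw [map_sign_eq_iff ((isPermMatrix_permMatrix σ).isStochastic.mul hA).1]
  ext i j
  simp only [posSupport, PEquiv.toMatrix_toPEquiv_mul, submatrix_apply, id]
  exact (not_iff_comm.1 ((hσ (σ i) j).trans σ.injective.eq_iff)).symm

lemma isIndivisible_of_posSupport_eq_ne {A : Matrix (Fin 3) (Fin 3) ℝ} (hA : IsStochastic A)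
    (h : posSupport A = (· ≠ ·)) : IsIndivisible A := by
  rintro B C hB hC rfl
  rw [isPermMatrix_iff_isPermPattern hB, isPermMatrix_iff_isPermPattern hC]
  exact xor_isPermPattern_of_comp_eq_ne (posSupport_mul hB.1 hC.1 ▸ h)

theorem indivisible_s3_characterization (A : Matrix (Fin 3) (Fin 3) ℝ)
    (hA : IsStochastic A) :
    (∀ B C : Matrix (Fin 3) (Fin 3) ℝ, IsStochastic B → IsStochastic C →
        A = B * C → Xor' (IsPermMatrix B) (IsPermMatrix C)) ↔
      (∃ P Q : Matrix (Fin 3) (Fin 3) ℝ, IsPermMatrix P ∧ IsPermMatrix Q ∧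
        (P * A * Q).map Real.sign = !![0, 1, 1; 1, 0, 1; 1, 1, 0]) := by
  change IsIndivisible A ↔ _
  constructor
  · intro h
    rcases col_subset_or_isPermPattern_or_isPermPattern_not (posSupport A) hA.exists_pos with
      ⟨j, k, hjk, hsub⟩ | hperm | ⟨σ, hσ⟩
    · exact absurd h (not_isIndivisible_of_col_subset hA hjk hsub)
    · exact absurd ((isPermMatrix_iff_isPermPattern hA).2 hperm) h.not_isPermMatrix
    · exact ⟨σ.permMatrix ℝ, 1, isPermMatrix_permMatrix σ, isPermMatrix_one,
        (mul_one (σ.permMatrix ℝ * A)).symm ▸ map_sign_permMatrix_mul_eq hA hσ⟩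
  · rintro ⟨P, Q, hP, hQ, hsign⟩
    have hPAQ : IsStochastic (P * A * Q) := (hP.isStochastic.mul hA).mul hQ.isStochastic
    exact (isIndivisible_of_posSupport_eq_ne hPAQ ((map_sign_eq_iff hPAQ.1).1 hsign)).of_mul_mul
      hP hQ
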